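/- arXiv:2304.02480 — 3 statements merged into one kernel-verified Lean document; each statement's English description precedes it below -/
import Mathlib

section
/- Let S and A be finite nonempty sets, let d be a probability distribution on S, let β > 0 and ε ≥ 0 be real numbers, and let f, f̃ : S × A → ℝ satisfy |f(s,a) − f̃(s,a)| ≤ ε for all (s,a). For each s ∈ S let π_θ(·|s) and π̃_θ(·|s) be the softmax distributions on A with inverse temperature β and logits f(s,·) and f̃(s,·) respectively. Then Σ_{s∈S} d(s) · D_TV(π_θ(·|s), π̃_θ(·|s)) ≤ sinh(2βε). -/
/-- The softmax distribution on a finite set `A` with inverse temperature `β`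
and logits `x`. -/
noncomputable def softmax {A : Type*} [Fintype A] (β : ℝ) (x : A → ℝ) (a : A) : ℝ :=
  Real.exp (β * x a) / ∑ a' : A, Real.exp (β * x a')

/-- The total variation distance between two distributions on a finite set. -/
noncomputable def tvDist {A : Type*} [Fintype A] (p q : A → ℝ) : ℝ :=
  (1 / 2) * ∑ a : A, |p a - q a|

lemma softmax_denom_pos {A : Type*} [Fintype A] [Nonempty A] (β : ℝ) (x : A → ℝ) :
    0 < ∑ a' : A, Real.exp (β * x a') :=
  Finset.sum_pos (fun a _ => Real.exp_pos _) Finset.univ_nonempty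

lemma softmax_nonneg {A : Type*} [Fintype A] [Nonempty A] (β : ℝ) (x : A → ℝ) (a : A) :
    0 ≤ softmax β x a :=
  div_nonneg (Real.exp_pos _).le (softmax_denom_pos β x).le

lemma softmax_sum_one {A : Type*} [Fintype A] [Nonempty A] (β : ℝ) (x : A → ℝ) :
    ∑ a : A, softmax β x a = 1 := by
  unfold softmax
  rw [← Finset.sum_div, div_self (softmax_denom_pos β x).ne']

lemma softmax_ratio_le {A : Type*} [Fintype A] [Nonempty A] (β ε : ℝ) (hβ : 0 < β)
    (x y : A → ℝ) (h : ∀ a, |x a - y a| ≤ ε) (a : A) :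
    softmax β x a ≤ Real.exp (2 * β * ε) * softmax β y a := by
  have hnum : ∀ b, Real.exp (β * x b) ≤ Real.exp (β * ε) * Real.exp (β * y b) := by
    intro b
    rw [← Real.exp_add]
    apply Real.exp_le_exp.2
    have := (abs_le.1 (h b)).2
    nlinarith [hβ.le]
  have hnum' : ∀ b, Real.exp (β * y b) ≤ Real.exp (β * ε) * Real.exp (β * x b) := by
    intro b
    rw [← Real.exp_add]
    apply Real.exp_le_exp.2
    have := (abs_le.1 (h b)).1
    nlinarith [hβ.le]
  have hden : ∑ b : A, Real.exp (β * y b) ≤ Real.exp (β * ε) * ∑ b : A, Real.exp (β * x b) := by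
    rw [Finset.mul_sum]
    exact Finset.sum_le_sum fun b _ => hnum' b
  have hDx := softmax_denom_pos β x
  have hDy := softmax_denom_pos β y
  unfold softmax
  rw [div_le_iff₀ hDx]
  have h1 : Real.exp (β * x a) ≤ Real.exp (β * ε) * Real.exp (β * y a) := hnum a
  have key : Real.exp (2 * β * ε) * Real.exp (β * y a) / (∑ a' : A, Real.exp (β * y a')) *
      (∑ a' : A, Real.exp (β * x a'))
      ≥ Real.exp (β * ε) * Real.exp (β * y a) := by
    rw [ge_iff_le, div_mul_eq_mul_div, le_div_iff₀ hDy]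
    have h2 : Real.exp (2 * β * ε) = Real.exp (β * ε) * Real.exp (β * ε) := by
      rw [← Real.exp_add]; ring_nf
    rw [h2]
    calc Real.exp (β * ε) * Real.exp (β * y a) * ∑ a' : A, Real.exp (β * y a')
        ≤ Real.exp (β * ε) * Real.exp (β * y a) *
            (Real.exp (β * ε) * ∑ a' : A, Real.exp (β * x a')) := by
          apply mul_le_mul_of_nonneg_left hden
          positivity
      _ = Real.exp (β * ε) * Real.exp (β * ε) * Real.exp (β * y a) *
            ∑ a' : A, Real.exp (β * x a') := by ring
  rw [← mul_div_assoc]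
  linarith [key, h1]

/-- If the observable expectation values `f` and their measured approximations `f̃`
differ by at most `ε`, then the expectation (over any state distribution `d`) of the
total variation distance between the corresponding softmax policies is at most
`sinh (2βε)`. -/
theorem expected_tvDist_softmax_le_sinh {S A : Type*} [Fintype S] [Fintype A]
    [Nonempty S] [Nonempty A]
    (d : S → ℝ) (hd0 : ∀ s : S, 0 ≤ d s) (hd1 : ∑ s : S, d s = 1)
    (β ε : ℝ) (hβ : 0 < β) (hε : 0 ≤ ε)
    (f ftilde : S → A → ℝ) (hf : ∀ (s : S) (a : A), |f s a - ftilde s a| ≤ ε) :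
    ∑ s : S, d s * tvDist (softmax β (f s)) (softmax β (ftilde s)) ≤
      Real.sinh (2 * β * ε) := by
  set x := 2 * β * ε with hx
  have hx0 : 0 ≤ x := by positivity
  have hexp1 : Real.exp (-x) ≤ 1 := Real.exp_le_one_iff.2 (by linarith)
  -- per-state bound
  have hstate : ∀ s : S, tvDist (softmax β (f s)) (softmax β (ftilde s)) ≤ 1 - Real.exp (-x) := by
    intro s
    set p := softmax β (f s)
    set q := softmax β (ftilde s)
    have hpq : ∀ a, p a ≤ Real.exp x * q a := softmax_ratio_le β ε hβ _ _ (hf s)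
    have hqp : ∀ a, q a ≤ Real.exp x * p a := by
      apply softmax_ratio_le β ε hβ
      intro a; rw [abs_sub_comm]; exact hf s a
    have hp0 : ∀ a, 0 ≤ p a := softmax_nonneg β (f s)
    have hq0 : ∀ a, 0 ≤ q a := softmax_nonneg β (ftilde s)
    have hpt : ∀ a, |p a - q a| ≤ (1 - Real.exp (-x)) * (p a + q a) := by
      intro a
      have hE : Real.exp (-x) * Real.exp x = 1 := by rw [← Real.exp_add]; simp
      have h1 : Real.exp (-x) * p a ≤ q a := by
        have := mul_le_mul_of_nonneg_left (hpq a) (Real.exp_pos (-x)).le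
        calc Real.exp (-x) * p a ≤ Real.exp (-x) * (Real.exp x * q a) := this
          _ = q a := by rw [← mul_assoc, hE, one_mul]
      have h2 : Real.exp (-x) * q a ≤ p a := by
        have := mul_le_mul_of_nonneg_left (hqp a) (Real.exp_pos (-x)).le
        calc Real.exp (-x) * q a ≤ Real.exp (-x) * (Real.exp x * p a) := this
          _ = p a := by rw [← mul_assoc, hE, one_mul]
      rw [abs_le]
      constructor <;> nlinarith [hp0 a, hq0 a]
    have hsum : ∑ a : A, |p a - q a| ≤ (1 - Real.exp (-x)) * 2 := by
      calc ∑ a : A, |p a - q a| ≤ ∑ a : A, (1 - Real.exp (-x)) * (p a + q a) :=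
            Finset.sum_le_sum fun a _ => hpt a
        _ = (1 - Real.exp (-x)) * (∑ a : A, p a + ∑ a : A, q a) := by
            rw [← Finset.mul_sum, Finset.sum_add_distrib]
        _ = (1 - Real.exp (-x)) * 2 := by
            rw [softmax_sum_one, softmax_sum_one]; norm_num
    unfold tvDist
    linarith
  have hfinal : 1 - Real.exp (-x) ≤ Real.sinh x := by
    rw [Real.sinh_eq]
    have hE : Real.exp x * Real.exp (-x) = 1 := by rw [← Real.exp_add]; simp
    nlinarith [sq_nonneg (Real.exp x - 1), Real.exp_pos x, Real.exp_pos (-x), hE]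
  calc ∑ s : S, d s * tvDist (softmax β (f s)) (softmax β (ftilde s))
      ≤ ∑ s : S, d s * (1 - Real.exp (-x)) := by
        apply Finset.sum_le_sum
        intro s _
        exact mul_le_mul_of_nonneg_left (hstate s) (hd0 s)
    _ = 1 - Real.exp (-x) := by rw [← Finset.sum_mul, hd1, one_mul]
    _ ≤ Real.sinh x := hfinal
end

section
/- Let S and A be finite nonempty sets, let d be a probability distribution on S, let β > 0, ε ≥ 0, δ ≥ 0 be real numbers, and let f, f̃ : S × A → ℝ satisfy |f(s,a) − f̃(s,a)| ≤ ε for all (s,a). For each s let π_θ(·|s) and π̃_θ(·|s) be the softmax distributions on A with inverse temperature β and logits f(s,·) and f̃(s,·), and let π_E(·|s) be a probability distribution on A. If Σ_{s∈S} d(s) · D_KL(π_E(·|s) ‖ π̃_θ(·|s)) ≤ δ, then Σ_{s∈S} d(s) · D_TV(π_θ(·|s), π_E(·|s)) ≤ sinh(2βε) + √2 · √δ. -/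
/-- The Kullback–Leibler divergence between two distributions on a finite set,
summed over the support of `p`. -/
noncomputable def klDiv {A : Type*} [Fintype A] (p q : A → ℝ) : ℝ :=
  ∑ a ∈ Finset.univ.filter (fun a : A => 0 < p a), p a * Real.log (p a / q a)

open Finset Real

section Softmax

variable {A : Type*} [Fintype A] [Nonempty A]

lemma softmax_pos (β : ℝ) (x : A → ℝ) (a : A) : 0 < softmax β x a := by
  unfold softmax
  positivity

lemma sum_softmax (β : ℝ) (x : A → ℝ) : ∑ a, softmax β x a = 1 := by
  have hZ : 0 < ∑ a, exp (β * x a) := by positivity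
  simp only [softmax, ← sum_div, div_self hZ.ne']

lemma softmax_le_exp_mul_softmax {β ε : ℝ} (hβ : 0 ≤ β) {x y : A → ℝ}
    (h : ∀ a, |x a - y a| ≤ ε) (a : A) :
    softmax β x a ≤ exp (2 * β * ε) * softmax β y a := by
  have hexp : ∀ {x y : A → ℝ}, (∀ a, |x a - y a| ≤ ε) →
      ∀ a, exp (β * x a) ≤ exp (β * ε) * exp (β * y a) := by
    intro x y h a
    rw [← exp_add, exp_le_exp]
    nlinarith [(abs_le.1 (h a)).2]
  have hZ : ∑ a, exp (β * y a) ≤ exp (β * ε) * ∑ a, exp (β * x a) := by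
    rw [mul_sum]
    exact sum_le_sum fun a _ => hexp (fun a => by rw [abs_sub_comm]; exact h a) a
  have hZx : 0 < ∑ a, exp (β * x a) := by positivity
  have hZy : 0 < ∑ a, exp (β * y a) := by positivity
  rw [softmax, softmax, ← mul_div_assoc, div_le_div_iff₀ hZx hZy,
    show 2 * β * ε = β * ε + β * ε by ring, exp_add]
  calc exp (β * x a) * ∑ a, exp (β * y a)
      ≤ (exp (β * ε) * exp (β * y a)) * (exp (β * ε) * ∑ a, exp (β * x a)) :=
        mul_le_mul (hexp h a) hZ hZy.le (by positivity)
    _ = exp (β * ε) * exp (β * ε) * exp (β * y a) * ∑ a, exp (β * x a) := by ring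

end Softmax

section TotalVariation

variable {A : Type*} [Fintype A]

lemma tvDist_comm (p q : A → ℝ) : tvDist p q = tvDist q p := by
  simp only [tvDist, abs_sub_comm]

lemma tvDist_triangle (p q r : A → ℝ) : tvDist p r ≤ tvDist p q + tvDist q r := by
  simp only [tvDist, ← mul_add, ← sum_add_distrib]
  gcongr
  exact abs_sub_le _ _ _

lemma tvDist_le_of_le_mul {p q : A → ℝ} {C : ℝ} (hC : 1 ≤ C) (hq0 : ∀ a, 0 ≤ q a)
    (hq1 : ∑ a, q a = 1) (hpq : ∀ a, p a ≤ C * q a) (hqp : ∀ a, q a ≤ C * p a) :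
    tvDist p q ≤ (C - 1) / 2 := by
  have hpt : ∀ a, |p a - q a| ≤ (C - 1) * q a := by
    intro a
    rw [abs_sub_le_iff]
    constructor
    · linarith [hpq a]
    · rcases le_total (q a) (p a) with hle | hle
      · nlinarith [mul_nonneg (sub_nonneg.2 hC) (hq0 a)]
      · nlinarith [hqp a, mul_nonneg (sub_nonneg.2 hC) (sub_nonneg.2 hle)]
  calc tvDist p q ≤ 1 / 2 * ∑ a, (C - 1) * q a := by
        unfold tvDist
        gcongr with a
        exact hpt a
    _ = (C - 1) / 2 := by rw [← mul_sum, hq1]; ring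

lemma half_exp_sub_one_le_sinh {t : ℝ} (ht : 0 ≤ t) : (exp t - 1) / 2 ≤ sinh t := by
  rw [sinh_eq]
  have : exp (-t) ≤ 1 := exp_le_one_iff.2 (neg_nonpos.2 ht)
  linarith

lemma tvDist_softmax_le_sinh [Nonempty A] {β ε : ℝ} (hβ : 0 ≤ β) (hε : 0 ≤ ε)
    {x y : A → ℝ} (h : ∀ a, |x a - y a| ≤ ε) :
    tvDist (softmax β x) (softmax β y) ≤ sinh (2 * β * ε) := by
  have h' : ∀ a, |y a - x a| ≤ ε := fun a => by rw [abs_sub_comm]; exact h a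
  refine (tvDist_le_of_le_mul (one_le_exp (by positivity)) (fun a => (softmax_pos β y a).le)
    (sum_softmax β y) (softmax_le_exp_mul_softmax hβ h)
    (softmax_le_exp_mul_softmax hβ h')).trans ?_
  exact half_exp_sub_one_le_sinh (by positivity)

end TotalVariation

section Hellinger

variable {A : Type*} [Fintype A]

lemma two_mul_sub_two_mul_sqrt_mul_sqrt_le_mul_log {p q : ℝ} (hp : 0 < p) (hq : 0 < q) :
    2 * p - 2 * (√p * √q) ≤ p * log (p / q) := by
  have hsp : 0 < √p := sqrt_pos.2 hp
  have hsq : 0 < √q := sqrt_pos.2 hq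
  have hlog : log (p / q) = 2 * log (√p / √q) := by
    rw [← Nat.cast_ofNat, ← log_pow, div_pow, sq_sqrt hp.le, sq_sqrt hq.le]
  have hle : 1 - √q / √p ≤ log (√p / √q) := by
    simpa only [inv_div] using one_sub_inv_le_log_of_pos (div_pos hsp hsq)
  calc 2 * p - 2 * (√p * √q) = 2 * p * (1 - √q / √p) := by
        field_simp
        linear_combination (-√q) * mul_self_sqrt hp.le
    _ ≤ 2 * p * log (√p / √q) := by gcongr
    _ = p * log (p / q) := by rw [hlog]; ring

lemma sum_sq_sqrt_sub_sqrt_le_klDiv {p q : A → ℝ} (hp0 : ∀ a, 0 ≤ p a) (hp1 : ∑ a, p a = 1)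
    (hq0 : ∀ a, 0 < q a) (hq1 : ∑ a, q a = 1) :
    ∑ a, (√(p a) - √(q a)) ^ 2 ≤ klDiv p q := by
  have hexpand : ∀ a, (√(p a) - √(q a)) ^ 2 = q a - p a + (2 * p a - 2 * (√(p a) * √(q a))) :=
    fun a => by
      rw [sub_sq, sq_sqrt (hp0 a), sq_sqrt (hq0 a).le]
      ring
  have hsupp : ∑ a with 0 < p a, (2 * p a - 2 * (√(p a) * √(q a)))
      = ∑ a, (2 * p a - 2 * (√(p a) * √(q a))) := by
    refine sum_filter_of_ne fun a _ hne => (hp0 a).lt_of_ne' fun hpa => hne ?_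
    simp [hpa]
  calc ∑ a, (√(p a) - √(q a)) ^ 2
      = ∑ a with 0 < p a, (2 * p a - 2 * (√(p a) * √(q a))) := by
        simp only [hexpand, sum_add_distrib, sum_sub_distrib, hp1, hq1, hsupp]
        ring
    _ ≤ klDiv p q :=
        sum_le_sum fun a ha =>
          two_mul_sub_two_mul_sqrt_mul_sqrt_le_mul_log (mem_filter.1 ha).2 (hq0 a)

lemma tvDist_sq_le_sum_sq_sqrt_sub_sqrt {p q : A → ℝ} (hp0 : ∀ a, 0 ≤ p a)
    (hp1 : ∑ a, p a = 1) (hq0 : ∀ a, 0 ≤ q a) (hq1 : ∑ a, q a = 1) :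
    tvDist p q ^ 2 ≤ ∑ a, (√(p a) - √(q a)) ^ 2 := by
  set H := ∑ a, (√(p a) - √(q a)) ^ 2
  have hfactor : ∀ a, |p a - q a| = |√(p a) - √(q a)| * (√(p a) + √(q a)) := fun a => by
    rw [← abs_of_nonneg (add_nonneg (sqrt_nonneg (p a)) (sqrt_nonneg (q a))), ← abs_mul,
      mul_comm, ← sq_sub_sq, sq_sqrt (hp0 a), sq_sqrt (hq0 a)]
  have hsum_add : ∑ a, (√(p a) + √(q a)) ^ 2 ≤ 4 := by
    calc ∑ a, (√(p a) + √(q a)) ^ 2 ≤ ∑ a, 2 * (p a + q a) := by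
          gcongr with a
          nlinarith [sq_sqrt (hp0 a), sq_sqrt (hq0 a), sq_nonneg (√(p a) - √(q a))]
      _ = 4 := by rw [← mul_sum, sum_add_distrib, hp1, hq1]; norm_num
  have hcs : (∑ a, |p a - q a|) ^ 2 ≤ H * ∑ a, (√(p a) + √(q a)) ^ 2 := by
    simp only [hfactor, H]
    simpa only [sq_abs] using sum_mul_sq_le_sq_mul_sq univ
      (fun a => |√(p a) - √(q a)|) (fun a => √(p a) + √(q a))
  have hH : 0 ≤ H := by positivity
  rw [tvDist, mul_pow]
  nlinarith

lemma klDiv_nonneg {p q : A → ℝ} (hp0 : ∀ a, 0 ≤ p a) (hp1 : ∑ a, p a = 1)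
    (hq0 : ∀ a, 0 < q a) (hq1 : ∑ a, q a = 1) : 0 ≤ klDiv p q :=
  (sum_nonneg fun _ _ => sq_nonneg _).trans (sum_sq_sqrt_sub_sqrt_le_klDiv hp0 hp1 hq0 hq1)

lemma tvDist_le_sqrt_klDiv {p q : A → ℝ} (hp0 : ∀ a, 0 ≤ p a) (hp1 : ∑ a, p a = 1)
    (hq0 : ∀ a, 0 < q a) (hq1 : ∑ a, q a = 1) : tvDist p q ≤ √(klDiv p q) :=
  (le_abs_self _).trans <| abs_le_sqrt <|
    (tvDist_sq_le_sum_sq_sqrt_sub_sqrt hp0 hp1 (fun a => (hq0 a).le) hq1).trans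
      (sum_sq_sqrt_sub_sqrt_le_klDiv hp0 hp1 hq0 hq1)

end Hellinger

lemma sum_mul_sqrt_le_sqrt_sum_mul {ι : Type*} (s : Finset ι) {w x : ι → ℝ}
    (hw0 : ∀ i, 0 ≤ w i) (hw1 : ∑ i ∈ s, w i = 1) (hx0 : ∀ i, 0 ≤ x i) :
    ∑ i ∈ s, w i * √(x i) ≤ √(∑ i ∈ s, w i * x i) := by
  calc ∑ i ∈ s, w i * √(x i) = ∑ i ∈ s, √(w i) * √(w i * x i) :=
        sum_congr rfl fun i _ => by rw [sqrt_mul (hw0 i), ← mul_assoc, mul_self_sqrt (hw0 i)]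
    _ ≤ √(∑ i ∈ s, w i) * √(∑ i ∈ s, w i * x i) :=
        sum_sqrt_mul_sqrt_le s hw0 fun i => mul_nonneg (hw0 i) (hx0 i)
    _ = √(∑ i ∈ s, w i * x i) := by rw [hw1, sqrt_one, one_mul]

theorem expected_tvDist_softmax_expert_bound_general {S A : Type*} [Fintype S] [Fintype A]
    [Nonempty A]
    (d : S → ℝ) (hd0 : ∀ s : S, 0 ≤ d s) (hd1 : ∑ s : S, d s = 1)
    (β ε δ : ℝ) (hβ : 0 < β) (hε : 0 ≤ ε)
    (f ftilde : S → A → ℝ) (hf : ∀ (s : S) (a : A), |f s a - ftilde s a| ≤ ε)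
    (πE : S → A → ℝ)
    (hE0 : ∀ (s : S) (a : A), 0 ≤ πE s a) (hE1 : ∀ s : S, ∑ a : A, πE s a = 1)
    (hKL : ∑ s : S, d s * klDiv (πE s) (softmax β (ftilde s)) ≤ δ) :
    ∑ s : S, d s * tvDist (softmax β (f s)) (πE s) ≤
      Real.sinh (2 * β * ε) + Real.sqrt 2 * Real.sqrt δ := by
  set KL := fun s => klDiv (πE s) (softmax β (ftilde s))
  have hstate : ∀ s, tvDist (softmax β (f s)) (πE s) ≤ sinh (2 * β * ε) + √(KL s) := fun s =>
    (tvDist_triangle _ (softmax β (ftilde s)) _).trans <|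
      add_le_add (tvDist_softmax_le_sinh hβ.le hε (hf s)) <| by
        rw [tvDist_comm]
        exact tvDist_le_sqrt_klDiv (hE0 s) (hE1 s) (softmax_pos β _) (sum_softmax β _)
  have hjensen : ∑ s, d s * √(KL s) ≤ √δ :=
    (sum_mul_sqrt_le_sqrt_sum_mul univ hd0 hd1 fun s =>
      klDiv_nonneg (hE0 s) (hE1 s) (softmax_pos β _) (sum_softmax β _)).trans (sqrt_le_sqrt hKL)
  calc ∑ s, d s * tvDist (softmax β (f s)) (πE s)
      ≤ ∑ s, d s * (sinh (2 * β * ε) + √(KL s)) :=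
        sum_le_sum fun s _ => mul_le_mul_of_nonneg_left (hstate s) (hd0 s)
    _ = sinh (2 * β * ε) + ∑ s, d s * √(KL s) := by
        simp only [mul_add, sum_add_distrib, ← sum_mul, hd1, one_mul]
    _ ≤ sinh (2 * β * ε) + √2 * √δ := by
        gcongr
        exact hjensen.trans (le_mul_of_one_le_left (sqrt_nonneg δ) (one_le_sqrt.2 one_le_two))

/-- If the true softmax policy `π_θ = softmax β (f s)` and the measured softmax policy
`π̃_θ = softmax β (f̃ s)` are built from observable values differing by at most `ε`,
and the expected KL divergence between the expert policy `π_E` and `π̃_θ` is at most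
`δ`, then the expected total variation distance between `π_θ` and `π_E` is at most
`sinh (2βε) + √2 · √δ`. -/
theorem expected_tvDist_softmax_expert_bound {S A : Type*} [Fintype S] [Fintype A]
    [Nonempty S] [Nonempty A]
    (d : S → ℝ) (hd0 : ∀ s : S, 0 ≤ d s) (hd1 : ∑ s : S, d s = 1)
    (β ε δ : ℝ) (hβ : 0 < β) (hε : 0 ≤ ε) (hδ : 0 ≤ δ)
    (f ftilde : S → A → ℝ) (hf : ∀ (s : S) (a : A), |f s a - ftilde s a| ≤ ε)
    (πE : S → A → ℝ)
    (hE0 : ∀ (s : S) (a : A), 0 ≤ πE s a) (hE1 : ∀ s : S, ∑ a : A, πE s a = 1)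
    (hKL : ∑ s : S, d s * klDiv (πE s) (softmax β (ftilde s)) ≤ δ) :
    ∑ s : S, d s * tvDist (softmax β (f s)) (πE s) ≤
      Real.sinh (2 * β * ε) + Real.sqrt 2 * Real.sqrt δ :=
  expected_tvDist_softmax_expert_bound_general d hd0 hd1 β ε δ hβ hε f ftilde hf πE hE0 hE1 hKL
end

section
/- Let S and A be finite nonempty sets, let γ ∈ [0,1), let T : S × A → PMF(S) be a transition kernel, let ρ₀ be a probability distribution on S, and let π and π_E be stationary policies (maps S → PMF(A)). Let ρ_π(s,a) = (1−γ) Σ_{t=0}^{∞} γ^t P(s_t = s, a_t = a | π) denote the discounted state–action occupancy measure induced by starting at s₀ ∼ ρ₀ and following a_t ∼ π(·|s_t), s_{t+1} ∼ T(·|s_t, a_t), and similarly ρ_{π_E} for π_E; let d_{π_E} denote the discounted state occupancy measure of π_E. Then D_TV(ρ_π, ρ_{π_E}) ≤ (1/(1−γ)) · Σ_{s∈S} d_{π_E}(s) · D_TV(π(·|s), π_E(·|s)). -/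
/-- `stateDist T π ρ₀ t s` is the probability `P(s_t = s | π)` that the Markov chain
induced by the policy `π` in the MDP with transition kernel `T` and initial state
distribution `ρ₀` is in state `s` at time `t`. -/
noncomputable def stateDist {S A : Type*} [Fintype S] [Fintype A]
    (T : S → A → PMF S) (π : S → PMF A) (ρ₀ : PMF S) : ℕ → S → ℝ
  | 0, s => (ρ₀ s).toReal
  | t + 1, s' =>
      ∑ s : S, ∑ a : A, stateDist T π ρ₀ t s * ((π s) a).toReal * ((T s a) s').toReal

/-- The discounted state occupancy measure `d_π(s) = (1−γ) Σ_t γ^t P(s_t = s | π)`. -/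
noncomputable def stateOcc {S A : Type*} [Fintype S] [Fintype A]
    (T : S → A → PMF S) (π : S → PMF A) (ρ₀ : PMF S) (γ : ℝ) (s : S) : ℝ :=
  (1 - γ) * ∑' t : ℕ, γ ^ t * stateDist T π ρ₀ t s

/-- The discounted state–action occupancy measure
`ρ_π(s,a) = (1−γ) Σ_t γ^t P(s_t = s, a_t = a | π)
          = (1−γ) Σ_t γ^t P(s_t = s | π) π(a|s)`. -/
noncomputable def saOcc {S A : Type*} [Fintype S] [Fintype A]
    (T : S → A → PMF S) (π : S → PMF A) (ρ₀ : PMF S) (γ : ℝ) (sa : S × A) : ℝ :=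
  (1 - γ) * ∑' t : ℕ, γ ^ t * stateDist T π ρ₀ t sa.1 * ((π sa.1) sa.2).toReal

/-!
Let `p_t`, `q_t` be the laws of `s_t` under `π` and `π_E`. Writing
`p_t(s) π(a|s) - q_t(s) π_E(a|s) = (p_t - q_t)(s) π(a|s) + q_t(s) (π - π_E)(a|s)` bounds the
distance `C_t` between the time-`t` state–action laws by `D_t + ε_t`, where `D_t = TV(p_t, q_t)`
and `ε_t = Σ_s q_t(s) TV(π(·|s), π_E(·|s))`. Both `p_{t+1}` and `q_{t+1}` are images of these
state–action laws under the same kernel `T`, so `D_{t+1} ≤ C_t`, and `D_0 = 0`; hence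
`C_t ≤ ε_0 + ⋯ + ε_t`. Discounting, `Σ_t γ^t Σ_{u ≤ t} ε_u = (1 - γ)⁻¹ Σ_u γ^u ε_u` is a Cauchy
product with the geometric series, and `(1 - γ) Σ_u γ^u ε_u = Σ_s d_{π_E}(s) TV(π(·|s), π_E(·|s))`.
-/

open Finset

namespace PMF

variable {α : Type*}

theorem sum_toReal_eq_one [Fintype α] (p : PMF α) : ∑ a, (p a).toReal = 1 := by
  rw [← ENNReal.toReal_sum fun a _ => p.apply_ne_top a,
    ← tsum_fintype (L := SummationFilter.unconditional α), p.tsum_coe,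
    ENNReal.toReal_one]

theorem toReal_le_one (p : PMF α) (a : α) : (p a).toReal ≤ 1 :=
  ENNReal.toReal_le_of_le_ofReal zero_le_one (by simpa using p.coe_le_one a)

end PMF

section tvDist

variable {α β : Type*} [Fintype α] [Fintype β]

theorem tvDist_nonneg (p q : α → ℝ) : 0 ≤ tvDist p q := by
  unfold tvDist
  positivity

theorem tvDist_self (p : α → ℝ) : tvDist p p = 0 := by
  simp [tvDist]

theorem tvDist_const_mul (c : ℝ) (p q : α → ℝ) :
    tvDist (fun a => c * p a) (fun a => c * q a) = |c| * tvDist p q := by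
  simp only [tvDist, ← mul_sub, abs_mul, ← mul_sum]
  ring

theorem tvDist_tsum_le {p q : ℕ → α → ℝ} (hp : ∀ a, Summable (p · a))
    (hq : ∀ a, Summable (q · a)) :
    tvDist (fun a => ∑' t, p t a) (fun a => ∑' t, q t a) ≤ ∑' t, tvDist (p t) (q t) := by
  have habs (a : α) : Summable fun t => |p t a - q t a| := ((hp a).sub (hq a)).abs
  simp only [tvDist]
  rw [tsum_mul_left, Summable.tsum_finsetSum fun a _ => habs a]
  refine mul_le_mul_of_nonneg_left (sum_le_sum fun a _ => ?_) (by norm_num)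
  rw [← (hp a).tsum_sub (hq a)]
  exact norm_tsum_le_tsum_norm (f := fun t => p t a - q t a) (habs a)

theorem tvDist_bind_le (p q : α → ℝ) (K : α → PMF β) :
    tvDist (fun b => ∑ a, p a * (K a b).toReal) (fun b => ∑ a, q a * (K a b).toReal) ≤
      tvDist p q := by
  unfold tvDist
  gcongr
  calc ∑ b, |∑ a, p a * (K a b).toReal - ∑ a, q a * (K a b).toReal|
      = ∑ b, |∑ a, (p a - q a) * (K a b).toReal| := by
        simp only [← sum_sub_distrib, sub_mul]
    _ ≤ ∑ b, ∑ a, |p a - q a| * (K a b).toReal := by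
        gcongr with b
        refine (abs_sum_le_sum_abs _ _).trans_eq ?_
        simp only [abs_mul, ENNReal.abs_toReal]
    _ = ∑ a, |p a - q a| := by
        rw [sum_comm]
        simp only [← mul_sum, PMF.sum_toReal_eq_one, mul_one]

theorem tvDist_compProd_le (p q : α → ℝ) (hq : ∀ a, 0 ≤ q a) (κ κ' : α → PMF β) :
    tvDist (fun x : α × β => p x.1 * (κ x.1 x.2).toReal)
        (fun x => q x.1 * (κ' x.1 x.2).toReal) ≤
      tvDist p q + ∑ a, q a * tvDist (fun b => (κ a b).toReal) (fun b => (κ' a b).toReal) := by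
  have key (a : α) (b : β) : |p a * (κ a b).toReal - q a * (κ' a b).toReal| ≤
      |p a - q a| * (κ a b).toReal + q a * |(κ a b).toReal - (κ' a b).toReal| := by
    calc |p a * (κ a b).toReal - q a * (κ' a b).toReal|
        = |(p a - q a) * (κ a b).toReal + q a * ((κ a b).toReal - (κ' a b).toReal)| := by
          ring_nf
      _ ≤ _ := by
          refine (abs_add_le _ _).trans_eq ?_
          rw [abs_mul, abs_mul, ENNReal.abs_toReal, abs_of_nonneg (hq a)]
  unfold tvDist
  calc 1 / 2 * ∑ x : α × β, |p x.1 * (κ x.1 x.2).toReal - q x.1 * (κ' x.1 x.2).toReal|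
      ≤ 1 / 2 * ∑ a, ∑ b,
          (|p a - q a| * (κ a b).toReal + q a * |(κ a b).toReal - (κ' a b).toReal|) := by
        rw [Fintype.sum_prod_type]
        gcongr with a _ b
        exact key a b
    _ = _ := by
        simp only [sum_add_distrib, ← mul_sum, PMF.sum_toReal_eq_one, mul_one]
        rw [mul_add, mul_sum univ fun a => q a * ∑ b, |(κ a b).toReal - (κ' a b).toReal|]
        simp only [mul_left_comm]

end tvDist

section Discounting

variable {γ : ℝ}

theorem summable_pow_mul_of_abs_le (hγ : |γ| < 1) {f : ℕ → ℝ} {C : ℝ} (hf : ∀ t, |f t| ≤ C) :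
    Summable fun t => γ ^ t * f t := by
  refine Summable.of_norm_bounded ((summable_geometric_of_abs_lt_one hγ).abs.mul_right C)
    fun t => ?_
  rw [Real.norm_eq_abs, abs_mul]
  exact mul_le_mul_of_nonneg_left (hf t) (abs_nonneg _)

theorem hasSum_pow_mul_sum_range_succ (hγ : |γ| < 1) {ε : ℕ → ℝ}
    (hε : Summable fun t => γ ^ t * ε t) :
    HasSum (fun t => γ ^ t * ∑ u ∈ range (t + 1), ε u) ((1 - γ)⁻¹ * ∑' t, γ ^ t * ε t) := by
  have h := hasSum_sum_range_mul_of_summable_norm (f := fun u => γ ^ u * ε u)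
    (g := fun k => γ ^ k) (by simpa only [Real.norm_eq_abs] using hε.abs)
    (by simpa only [Real.norm_eq_abs] using (summable_geometric_of_abs_lt_one hγ).abs)
  rw [tsum_geometric_of_abs_lt_one hγ, mul_comm] at h
  refine h.congr_fun fun t => ?_
  rw [mul_sum]
  refine sum_congr rfl fun u hu => ?_
  rw [mul_right_comm, ← pow_add, Nat.add_sub_cancel' (Nat.lt_succ_iff.1 (mem_range.1 hu))]

theorem tsum_pow_mul_le_of_le_sum_range (hγ0 : 0 ≤ γ) (hγ1 : γ < 1) {C ε : ℕ → ℝ}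
    (hC0 : ∀ t, 0 ≤ C t) (hC : ∀ t, C t ≤ ∑ u ∈ range (t + 1), ε u)
    (hε : Summable fun t => γ ^ t * ε t) :
    ∑' t, γ ^ t * C t ≤ (1 - γ)⁻¹ * ∑' t, γ ^ t * ε t := by
  have hS := hasSum_pow_mul_sum_range_succ (abs_lt.2 ⟨by linarith, hγ1⟩) hε
  have hle (t : ℕ) : γ ^ t * C t ≤ γ ^ t * ∑ u ∈ range (t + 1), ε u :=
    mul_le_mul_of_nonneg_left (hC t) (pow_nonneg hγ0 t)
  rw [← hS.tsum_eq]
  exact Summable.tsum_le_tsum hle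
    (hS.summable.of_nonneg_of_le (fun t => mul_nonneg (pow_nonneg hγ0 t) (hC0 t)) hle)
    hS.summable

end Discounting

section MDP

variable {S A : Type*} [Fintype S] [Fintype A] (T : S → A → PMF S)

/-- The law `P(s_t = s, a_t = a | π)` of the state–action pair at time `t`. -/
noncomputable def saDist (π : S → PMF A) (ρ₀ : PMF S) (t : ℕ) (sa : S × A) : ℝ :=
  stateDist T π ρ₀ t sa.1 * (π sa.1 sa.2).toReal

variable (π : S → PMF A) (ρ₀ : PMF S)

theorem stateDist_zero : stateDist T π ρ₀ 0 = fun s => (ρ₀ s).toReal :=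
  rfl

theorem stateDist_succ (t : ℕ) :
    stateDist T π ρ₀ (t + 1) = fun s' => ∑ sa, saDist T π ρ₀ t sa * (T sa.1 sa.2 s').toReal := by
  funext s'
  rw [stateDist, Fintype.sum_prod_type]
  rfl

theorem stateDist_nonneg (t : ℕ) (s : S) : 0 ≤ stateDist T π ρ₀ t s := by
  induction t generalizing s with
  | zero => exact ENNReal.toReal_nonneg
  | succ t ih =>
      rw [stateDist_succ]
      exact sum_nonneg fun sa _ => mul_nonneg (mul_nonneg (ih _) ENNReal.toReal_nonneg)
        ENNReal.toReal_nonneg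

theorem sum_stateDist_eq_one (t : ℕ) : ∑ s, stateDist T π ρ₀ t s = 1 := by
  induction t with
  | zero => exact PMF.sum_toReal_eq_one ρ₀
  | succ t ih =>
      rw [stateDist_succ, sum_comm]
      simp only [← mul_sum, PMF.sum_toReal_eq_one, mul_one, saDist, Fintype.sum_prod_type]
      exact ih

theorem abs_stateDist_le_one (t : ℕ) (s : S) : |stateDist T π ρ₀ t s| ≤ 1 := by
  rw [abs_of_nonneg (stateDist_nonneg T π ρ₀ t s), ← sum_stateDist_eq_one T π ρ₀ t]
  exact single_le_sum (fun s _ => stateDist_nonneg T π ρ₀ t s) (mem_univ s)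

theorem abs_saDist_le_one (t : ℕ) (sa : S × A) : |saDist T π ρ₀ t sa| ≤ 1 := by
  rw [saDist, abs_mul, ENNReal.abs_toReal]
  exact mul_le_one₀ (abs_stateDist_le_one T π ρ₀ t sa.1) ENNReal.toReal_nonneg
    (PMF.toReal_le_one _ _)

theorem summable_pow_mul_stateDist_mul {γ : ℝ} (hγ : |γ| < 1) (c : S → ℝ) (s : S) :
    Summable fun t => γ ^ t * (stateDist T π ρ₀ t s * c s) :=
  summable_pow_mul_of_abs_le hγ fun t => by
    rw [abs_mul]
    exact mul_le_of_le_one_left (abs_nonneg _) (abs_stateDist_le_one T π ρ₀ t s)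

theorem sum_stateOcc_mul {γ : ℝ} (hγ : |γ| < 1) (c : S → ℝ) :
    ∑ s, stateOcc T π ρ₀ γ s * c s =
      (1 - γ) * ∑' t, γ ^ t * ∑ s, stateDist T π ρ₀ t s * c s := by
  calc ∑ s, stateOcc T π ρ₀ γ s * c s
      = (1 - γ) * ∑ s, ∑' t, γ ^ t * (stateDist T π ρ₀ t s * c s) := by
        simp only [stateOcc, mul_sum, mul_assoc, ← tsum_mul_right]
    _ = (1 - γ) * ∑' t, γ ^ t * ∑ s, stateDist T π ρ₀ t s * c s := by
        rw [← Summable.tsum_finsetSum fun s _ => summable_pow_mul_stateDist_mul T π ρ₀ hγ c s]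
        simp only [mul_sum]

variable (πE : S → PMF A)

theorem tvDist_stateDist_succ_le (t : ℕ) :
    tvDist (stateDist T π ρ₀ (t + 1)) (stateDist T πE ρ₀ (t + 1)) ≤
      tvDist (saDist T π ρ₀ t) (saDist T πE ρ₀ t) := by
  rw [stateDist_succ, stateDist_succ]
  exact tvDist_bind_le (saDist T π ρ₀ t) (saDist T πE ρ₀ t) fun sa => T sa.1 sa.2

theorem tvDist_saDist_le (t : ℕ) :
    tvDist (saDist T π ρ₀ t) (saDist T πE ρ₀ t) ≤
      ∑ u ∈ range (t + 1), ∑ s, stateDist T πE ρ₀ u s *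
        tvDist (fun a => (π s a).toReal) (fun a => (πE s a).toReal) := by
  have hstep (t : ℕ) := tvDist_compProd_le (stateDist T π ρ₀ t) (stateDist T πE ρ₀ t)
    (stateDist_nonneg T πE ρ₀ t) π πE
  induction t with
  | zero =>
      refine (hstep 0).trans_eq ?_
      simp [stateDist_zero, tvDist_self]
  | succ t ih =>
      rw [sum_range_succ]
      exact (hstep (t + 1)).trans
        (add_le_add_left ((tvDist_stateDist_succ_le T π ρ₀ πE t).trans ih) _)

theorem tvDist_saOcc_le_tsum {γ : ℝ} (hγ0 : 0 ≤ γ) (hγ1 : γ < 1) :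
    tvDist (saOcc T π ρ₀ γ) (saOcc T πE ρ₀ γ) ≤
      (1 - γ) * ∑' t, γ ^ t * tvDist (saDist T π ρ₀ t) (saDist T πE ρ₀ t) := by
  have hγ : |γ| < 1 := abs_lt.2 ⟨by linarith, hγ1⟩
  have hsaOcc (π : S → PMF A) :
      saOcc T π ρ₀ γ = fun sa => (1 - γ) * ∑' t, γ ^ t * saDist T π ρ₀ t sa := by
    funext sa
    simp only [saOcc, saDist, mul_assoc]
  have hsum (π : S → PMF A) (sa : S × A) : Summable fun t => γ ^ t * saDist T π ρ₀ t sa :=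
    summable_pow_mul_of_abs_le hγ (abs_saDist_le_one T π ρ₀ · sa)
  rw [hsaOcc, hsaOcc, tvDist_const_mul, abs_of_nonneg (by linarith)]
  refine mul_le_mul_of_nonneg_left ((tvDist_tsum_le (hsum π) (hsum πE)).trans_eq
    (tsum_congr fun t => ?_)) (by linarith)
  rw [tvDist_const_mul, abs_of_nonneg (pow_nonneg hγ0 t)]

end MDP

theorem tvDist_saOcc_le_general {S A : Type*} [Fintype S] [Fintype A]
    (γ : ℝ) (hγ0 : 0 ≤ γ) (hγ1 : γ < 1)
    (T : S → A → PMF S) (ρ₀ : PMF S) (π πE : S → PMF A) :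
    tvDist (saOcc T π ρ₀ γ) (saOcc T πE ρ₀ γ) ≤
      (1 / (1 - γ)) *
        ∑ s : S, stateOcc T πE ρ₀ γ s *
          tvDist (fun a => ((π s) a).toReal) (fun a => ((πE s) a).toReal) := by
  have hγ : |γ| < 1 := abs_lt.2 ⟨by linarith, hγ1⟩
  set ε : ℕ → ℝ := fun t => ∑ s, stateDist T πE ρ₀ t s *
    tvDist (fun a => ((π s) a).toReal) (fun a => ((πE s) a).toReal)
  have hε : Summable fun t => γ ^ t * ε t := by
    simpa only [ε, mul_sum] using summable_sum fun s _ =>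
      summable_pow_mul_stateDist_mul T πE ρ₀ hγ
        (fun s => tvDist (fun a => ((π s) a).toReal) (fun a => ((πE s) a).toReal)) s
  calc tvDist (saOcc T π ρ₀ γ) (saOcc T πE ρ₀ γ)
      ≤ (1 - γ) * ∑' t, γ ^ t * tvDist (saDist T π ρ₀ t) (saDist T πE ρ₀ t) :=
        tvDist_saOcc_le_tsum T π ρ₀ πE hγ0 hγ1
    _ ≤ (1 - γ) * ((1 - γ)⁻¹ * ∑' t, γ ^ t * ε t) :=
        mul_le_mul_of_nonneg_left (tsum_pow_mul_le_of_le_sum_range hγ0 hγ1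
          (fun t => tvDist_nonneg _ _) (tvDist_saDist_le T π ρ₀ πE) hε) (by linarith)
    _ = 1 / (1 - γ) * ((1 - γ) * ∑' t, γ ^ t * ε t) := by
        field_simp
    _ = _ := by
        rw [sum_stateOcc_mul T πE ρ₀ hγ]

/-- The total variation distance between the discounted state–action occupancy
measures of two policies is bounded by `1/(1−γ)` times the expected (under `d_{π_E}`)
total variation distance between the policies. -/
theorem tvDist_saOcc_le {S A : Type*} [Fintype S] [Fintype A]
    [Nonempty S] [Nonempty A]
    (γ : ℝ) (hγ0 : 0 ≤ γ) (hγ1 : γ < 1)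
    (T : S → A → PMF S) (ρ₀ : PMF S) (π πE : S → PMF A) :
    tvDist (saOcc T π ρ₀ γ) (saOcc T πE ρ₀ γ) ≤
      (1 / (1 - γ)) *
        ∑ s : S, stateOcc T πE ρ₀ γ s *
          tvDist (fun a => ((π s) a).toReal) (fun a => ((πE s) a).toReal) :=
  tvDist_saOcc_le_general γ hγ0 hγ1 T ρ₀ π πE
end
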